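/- arXiv:2504.21552 — 3 statements merged into one kernel-verified Lean document; each statement's English description precedes it below -/
import Mathlib

section
/- Let N_r ≥ 2 be an integer and let a ∈ [0,1]. If i* ∈ {0,1,…,N_r−1} is an index minimizing, over i ∈ {0,1,…,N_r−1}, the Euclidean distance from the point (a, 1−a) ∈ ℝ² to the line through the origin and the reference point r^(i), then |a − i*/(N_r−1)| ≤ (2−√2)/(N_r−1). -/
/-! With `t = i/(N_r−1)`, the distance from `(a, 1−a)` to the line through `(t, 1−t)` is
`|a − t| / ‖(t, 1−t)‖`, and for `t ∈ [0,1]` that norm lies in `[1/√2, 1]`. Hence minimality of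
`i*` gives `x ≤ √2·|a − t|` for every grid point `t`, where `x = |a − i*/(N_r−1)|`. The nearest
grid point is within half a step `h = 1/(N_r−1)` of `a`, so `x < h`; then the neighbour of `i*`
on the side of `a` lies at distance `h − x` from `a`, and `x ≤ √2·(h − x)` means
`x ≤ √2/(1+√2)·h = (2−√2)·h`. -/

/-- Euclidean distance in the plane from the point `v` to the line through the origin
and the point `w` (the infimum of distances from `v` to points of the line). -/
noncomputable def distToLine (v w : EuclideanSpace ℝ (Fin 2)) : ℝ :=
  Metric.infDist v {p : EuclideanSpace ℝ (Fin 2) | ∃ t : ℝ, p = t • w}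

/-- The point `(x, y)` of the Euclidean plane. -/
noncomputable def pt (x y : ℝ) : EuclideanSpace ℝ (Fin 2) :=
  (WithLp.equiv 2 (Fin 2 → ℝ)).symm ![x, y]

/-- The `i`-th of the `N_r` bi-objective reference points:
`r⁽ⁱ⁾ = (i/(N_r−1), 1 − i/(N_r−1))` for `i = 0, 1, …, N_r−1`. -/
noncomputable def refPoint (Nr i : ℕ) : EuclideanSpace ℝ (Fin 2) :=
  pt ((i : ℝ) / ((Nr : ℝ) - 1)) (1 - (i : ℝ) / ((Nr : ℝ) - 1))

open Real Set

lemma dist_pt_smul_pt (v₁ v₂ w₁ w₂ t : ℝ) :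
    dist (pt v₁ v₂) (t • pt w₁ w₂) = √((v₁ - t * w₁) ^ 2 + (v₂ - t * w₂) ^ 2) := by
  rw [EuclideanSpace.dist_eq, Fin.sum_univ_two]
  simp [pt, Real.dist_eq]

lemma distToLine_pt (v₁ v₂ w₁ w₂ : ℝ) (hw : 0 < w₁ ^ 2 + w₂ ^ 2) :
    distToLine (pt v₁ v₂) (pt w₁ w₂) = |v₁ * w₂ - v₂ * w₁| / √(w₁ ^ 2 + w₂ ^ 2) := by
  unfold distToLine
  apply le_antisymm
  · -- the distance is attained at the orthogonal projection of `v` on the line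
    refine le_trans (Metric.infDist_le_dist_of_mem
      ⟨(v₁ * w₁ + v₂ * w₂) / (w₁ ^ 2 + w₂ ^ 2), rfl⟩) (le_of_eq ?_)
    rw [dist_pt_smul_pt, ← sqrt_sq_eq_abs, ← sqrt_div' _ hw.le]
    congr 1
    field_simp
    ring
  · refine (Metric.le_infDist ?_).2 ?_
    · exact ⟨0, 0, (zero_smul ℝ _).symm⟩
    rintro _ ⟨t, rfl⟩
    rw [dist_pt_smul_pt, div_le_iff₀ (sqrt_pos.2 hw), ← sqrt_mul (by positivity),
      ← sqrt_sq_eq_abs]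
    apply sqrt_le_sqrt
    -- Lagrange's identity `(A² + B²)(w₁² + w₂²) = (A w₂ − B w₁)² + (A w₁ + B w₂)²`
    nlinarith [sq_nonneg ((v₁ - t * w₁) * w₁ + (v₂ - t * w₂) * w₂)]

lemma one_half_le_sq_add_one_sub_sq (t : ℝ) : 1 / 2 ≤ t ^ 2 + (1 - t) ^ 2 := by
  nlinarith [sq_nonneg (t - 1 / 2)]

lemma sqrt_sq_add_one_sub_sq_pos (t : ℝ) : 0 < √(t ^ 2 + (1 - t) ^ 2) :=
  sqrt_pos.2 (by linarith [one_half_le_sq_add_one_sub_sq t])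

lemma distToLine_pt_one_sub (a t : ℝ) :
    distToLine (pt a (1 - a)) (pt t (1 - t)) = |a - t| / √(t ^ 2 + (1 - t) ^ 2) := by
  rw [distToLine_pt _ _ _ _ (by linarith [one_half_le_sq_add_one_sub_sq t]),
    show a * (1 - t) - (1 - a) * t = a - t by ring]

lemma abs_sub_le_distToLine {a t : ℝ} (ht : t ∈ Icc (0 : ℝ) 1) :
    |a - t| ≤ distToLine (pt a (1 - a)) (pt t (1 - t)) := by
  rw [distToLine_pt_one_sub, le_div_iff₀ (sqrt_sq_add_one_sub_sq_pos t)]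
  exact mul_le_of_le_one_right (abs_nonneg _) (sqrt_le_one.2 (by nlinarith [ht.1, ht.2]))

lemma distToLine_le_sqrt_two_mul_abs_sub (a t : ℝ) :
    distToLine (pt a (1 - a)) (pt t (1 - t)) ≤ √2 * |a - t| := by
  rw [distToLine_pt_one_sub, div_le_iff₀ (sqrt_sq_add_one_sub_sq_pos t), mul_right_comm,
    ← sqrt_mul zero_le_two]
  exact le_mul_of_one_le_left (abs_nonneg _)
    (one_le_sqrt.2 (by linarith [one_half_le_sq_add_one_sub_sq t]))

lemma exists_nat_le_abs_sub_le_half {m : ℕ} {u : ℝ} (hu : u ∈ Icc (0 : ℝ) m) :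
    ∃ j ≤ m, |u - j| ≤ 1 / 2 := by
  have hu₀ : 0 ≤ u + 1 / 2 := by linarith [hu.1]
  refine ⟨⌊u + 1 / 2⌋₊, Nat.lt_succ_iff.1 ((Nat.floor_lt hu₀).2 ?_), abs_le.2 ⟨?_, ?_⟩⟩
  · push_cast
    linarith [hu.2]
  · linarith [Nat.floor_le hu₀]
  · linarith [Nat.lt_floor_add_one (u + 1 / 2)]

lemma le_two_sub_sqrt_two_of_le_sqrt_two_mul_one_sub {x : ℝ} (h : x ≤ √2 * (1 - x)) :
    x ≤ 2 - √2 := by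
  have hs : (1 : ℝ) ≤ √2 := one_le_sqrt.2 one_le_two
  nlinarith [sq_sqrt zero_le_two, mul_le_mul_of_nonneg_left h (sub_nonneg.2 hs)]

theorem abs_sub_le_two_sub_sqrt_two {m k : ℕ} {u : ℝ} (hu : u ∈ Icc (0 : ℝ) m) (hk : k ≤ m)
    (h : ∀ j ≤ m, |u - k| ≤ √2 * |u - j|) : |u - k| ≤ 2 - √2 := by
  obtain ⟨j₀, hj₀, hj₀u⟩ := exists_nat_le_abs_sub_le_half hu
  have hlt : |u - k| < 1 := by
    nlinarith [h j₀ hj₀, sqrt_nonneg 2, sqrt_lt' two_pos |>.2 (by norm_num : (2 : ℝ) < 2 ^ 2)]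
  rw [abs_lt] at hlt
  apply le_two_sub_sqrt_two_of_le_sqrt_two_mul_one_sub
  rcases lt_trichotomy u k with hlt' | heq | hgt
  · have hk₀ : 0 < k := by exact_mod_cast hu.1.trans_lt hlt'
    obtain ⟨j, rfl⟩ : ∃ j, k = j + 1 := ⟨k - 1, by omega⟩
    have hj := h j (by omega)
    push_cast at hj hlt' hlt ⊢
    rw [abs_of_neg (by linarith)] at hj ⊢
    rw [abs_of_nonneg (by linarith)] at hj
    linarith
  · simp [heq]
  · have hkm : k < m := by exact_mod_cast hgt.trans_le hu.2
    have hj := h (k + 1) hkm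
    push_cast at hj
    rw [abs_of_pos (by linarith)] at hj ⊢
    rw [abs_of_neg (by linarith)] at hj
    linarith

/-- Let `N_r ≥ 2` be an integer and `a ∈ [0,1]`. If `i* ∈ {0,…,N_r−1}` minimizes, over
`i ∈ {0,…,N_r−1}`, the Euclidean distance from the point `(a, 1−a)` to the line through
the origin and the reference point `r⁽ⁱ⁾`, then
`|a − i*/(N_r−1)| ≤ (2−√2)/(N_r−1)`. -/
theorem associated_refPoint_close (Nr : ℕ) (hNr : 2 ≤ Nr) (a : ℝ)
    (ha : a ∈ Set.Icc (0 : ℝ) 1) (istar : ℕ) (histar : istar ≤ Nr - 1)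
    (hmin : ∀ i ≤ Nr - 1,
      distToLine (pt a (1 - a)) (refPoint Nr istar) ≤
        distToLine (pt a (1 - a)) (refPoint Nr i)) :
    |a - (istar : ℝ) / ((Nr : ℝ) - 1)| ≤ (2 - Real.sqrt 2) / ((Nr : ℝ) - 1) := by
  set m := Nr - 1 with hm_def
  have hm : (Nr : ℝ) - 1 = m := by rw [hm_def, Nat.cast_sub (by omega), Nat.cast_one]
  have hm₀ : (0 : ℝ) < m := by exact_mod_cast (by omega : 0 < m)
  have href (i : ℕ) : refPoint Nr i = pt (i / m) (1 - i / m) := by rw [refPoint, hm]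
  have hscale (i : ℕ) : |a - i / m| = |a * m - i| / m := by
    rw [show a - i / m = (a * m - i) / m by field_simp, abs_div, abs_of_pos hm₀]
  have hk : (istar : ℝ) / m ∈ Icc (0 : ℝ) 1 :=
    ⟨by positivity, div_le_one_of_le₀ (by exact_mod_cast histar) hm₀.le⟩
  have hclose : ∀ j ≤ m, |a * m - istar| ≤ √2 * |a * m - j| := by
    intro j hj
    have := (abs_sub_le_distToLine hk).trans <| (href istar ▸ href j ▸ hmin j hj).trans <|
      distToLine_le_sqrt_two_mul_abs_sub a _
    rwa [hscale, hscale, mul_div_assoc', div_le_div_iff_of_pos_right hm₀] at this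
  have hu : a * m ∈ Icc (0 : ℝ) m :=
    ⟨mul_nonneg ha.1 hm₀.le, mul_le_of_le_one_left hm₀.le ha.2⟩
  rw [hm, hscale, div_le_div_iff_of_pos_right hm₀]
  exact abs_sub_le_two_sub_sqrt_two hu histar hclose
end

section
/- Let n ≥ 1 and N_r ≥ 2 be integers and let S ⊆ {0,1,…,n} satisfy 0 ∈ S and n ∈ S. Suppose that for every i ∈ {0,1,…,N_r−1} there exists s ∈ S with |s/n − i/(N_r−1)| ≤ (2−√2)/(N_r−1). Then MEI(S) ≤ ⌈(5−2√2)·n/(N_r−1)⌉. -/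
/-!
Between two consecutive elements `a < b` of `S` put the midpoint `t = (a + b) / 2`. The grid
point `i n / (N_r - 1)` nearest to `t` is within `n / (2 (N_r - 1))` of it, and by hypothesis
some `s ∈ S` lies within `(2 - √2) n / (N_r - 1)` of that grid point. As no element of `S` lies
strictly between `a` and `b`, this forces `(b - a) / 2 ≤ (2 - √2 + 1/2) n / (N_r - 1)`, i.e.
`b - a ≤ (5 - 2√2) n / (N_r - 1)`. Since `0, n ∈ S`, the two end intervals of `MEI` are empty.
-/

/-- The maximum empty interval size of a set `S ⊆ {0,1,…,n}`: with the elements of `S`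
listed in increasing order as `j₁ < j₂ < … < jₘ`, it is
`max { j₁, n − jₘ, j_{i+1} − j_i : i = 1,…,m−1 }`. -/
def MEI (n : ℕ) (S : Finset ℕ) : ℕ :=
  let l := S.sort (· ≤ ·)
  (l.headI :: (n - l.getLastD 0) :: List.zipWith (fun a b => b - a) l l.tail).foldr max 0

namespace List

variable {α : Type*}

theorem Pairwise.headI_le [Preorder α] [Inhabited α] {l : List α} (hl : l.Pairwise (· ≤ ·))
    {a : α} (ha : a ∈ l) : l.headI ≤ a := by
  cases l with
  | nil => simp at ha
  | cons x t =>
    rcases mem_cons.1 ha with rfl | ha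
    · exact le_rfl
    · exact rel_of_pairwise_cons hl ha

theorem Pairwise.le_getLastD [Preorder α] {l : List α} (hl : l.Pairwise (· ≤ ·)) {a : α}
    (ha : a ∈ l) (d : α) : a ≤ l.getLastD d := by
  obtain ⟨l', z, rfl⟩ := (eq_nil_or_concat l).resolve_left (ne_nil_of_mem ha)
  simp only [concat_eq_append] at hl ha ⊢
  rw [getLastD_concat]
  rcases mem_append.1 ha with ha | ha
  · exact (pairwise_append.1 hl).2.2 a ha z (mem_singleton_self z)
  · exact (mem_singleton.1 ha).le

theorem Pairwise.exists_adjacent_of_mem_zipWith_tail [Preorder α] {β : Type*}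
    {f : α → α → β} {l : List α} (hl : l.Pairwise (· ≤ ·)) {y : β}
    (hy : y ∈ zipWith f l l.tail) :
    ∃ a ∈ l, ∃ b ∈ l, (∀ s ∈ l, s ≤ a ∨ b ≤ s) ∧ y = f a b := by
  obtain ⟨k, hk, rfl⟩ := mem_iff_getElem.1 hy
  have hk1 : k + 1 < l.length := by
    rw [length_zipWith, length_tail] at hk; omega
  have hmono := sortedLE_iff_getElem_le_getElem_of_le.1 hl.sortedLE
  refine ⟨l[k], getElem_mem _, l[k + 1], getElem_mem _, fun s hs => ?_, by simp⟩
  obtain ⟨j, hj, rfl⟩ := mem_iff_getElem.1 hs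
  rcases le_or_gt j k with hjk | hkj
  · exact Or.inl (hmono hjk)
  · exact Or.inr (hmono hkj)

end List

theorem MEI_le_of_gap_le {n B : ℕ} {S : Finset ℕ} (h0 : 0 ∈ S) (hn : n ∈ S)
    (hgap : ∀ a ∈ S, ∀ b ∈ S, (∀ s ∈ S, s ≤ a ∨ b ≤ s) → b - a ≤ B) :
    MEI n S ≤ B := by
  have hmem : ∀ x, x ∈ S.sort (· ≤ ·) ↔ x ∈ S := fun x => Finset.mem_sort _
  have hsorted := Finset.pairwise_sort S (· ≤ ·)
  have hhead := hsorted.headI_le ((hmem 0).2 h0)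
  have hlast := hsorted.le_getLastD ((hmem n).2 hn) 0
  apply List.max_le_of_forall_le
  simp only [List.forall_mem_cons]
  refine ⟨by omega, by omega, fun y hy => ?_⟩
  obtain ⟨a, ha, b, hb, hadj, rfl⟩ := hsorted.exists_adjacent_of_mem_zipWith_tail hy
  exact hgap a ((hmem a).1 ha) b ((hmem b).1 hb) fun s hs => hadj s ((hmem s).2 hs)

theorem exists_nat_le_abs_mul_sub_le {h t : ℝ} {m : ℕ} (hh : 0 < h)
    (ht : t ∈ Set.Icc 0 (m * h)) :
    ∃ i ≤ m, |(i : ℝ) * h - t| ≤ h / 2 := by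
  set x := t / h
  have hx0 : 0 ≤ x := div_nonneg ht.1 hh.le
  have hxm : x ≤ m := (div_le_iff₀ hh).2 ht.2
  refine ⟨⌊x + 1 / 2⌋₊, ?_, ?_⟩
  · have := (Nat.floor_lt (by positivity)).2
      (show x + 1 / 2 < (m + 1 : ℕ) by push_cast; linarith)
    omega
  · have hlo := Nat.floor_le (show 0 ≤ x + 1 / 2 by positivity)
    have hhi := Nat.lt_floor_add_one (x + 1 / 2)
    calc |(⌊x + 1 / 2⌋₊ : ℝ) * h - t| = |(⌊x + 1 / 2⌋₊ : ℝ) - x| * h := by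
          rw [← abs_of_pos hh, ← abs_mul, abs_of_pos hh, sub_mul, div_mul_cancel₀ t hh.ne']
      _ ≤ 1 / 2 * h := by gcongr; exact abs_le.2 ⟨by linarith, by linarith⟩
      _ = h / 2 := by ring

theorem sub_le_of_forall_notMem_Ioo {T : Set ℝ} {h r a b : ℝ} {m : ℕ} (hh : 0 < h)
    (hcover : ∀ i ≤ m, ∃ s ∈ T, |s - i * h| ≤ r) (ha : 0 ≤ a) (hb : b ≤ m * h)
    (hgap : ∀ s ∈ T, s ∉ Set.Ioo a b) : b - a ≤ 2 * r + h := by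
  by_contra! hab
  have hr : 0 ≤ r := by
    obtain ⟨_, _, hs⟩ := hcover 0 m.zero_le
    exact (abs_nonneg _).trans hs
  obtain ⟨i, him, hi⟩ :=
    exists_nat_le_abs_mul_sub_le (m := m) (t := (a + b) / 2) hh ⟨by linarith, by linarith⟩
  obtain ⟨s, hsT, hs⟩ := hcover i him
  have hst : |s - (a + b) / 2| ≤ r + h / 2 :=
    (abs_sub_le _ _ _).trans (add_le_add hs hi)
  exact hgap s hsT ⟨by linarith [(abs_le.1 hst).1], by linarith [(abs_le.1 hst).2]⟩

theorem Nat.sub_le_ceil_of_forall_le_or_le {S : Set ℕ} {h r : ℝ} {m a b : ℕ} (hh : 0 < h)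
    (hcover : ∀ i ≤ m, ∃ s ∈ S, |(s : ℝ) - i * h| ≤ r) (hb : (b : ℝ) ≤ m * h)
    (hadj : ∀ s ∈ S, s ≤ a ∨ b ≤ s) : b - a ≤ ⌈2 * r + h⌉₊ := by
  have hcover' : ∀ i ≤ m, ∃ s ∈ ((↑) '' S : Set ℝ), |s - i * h| ≤ r := by
    intro i hi
    obtain ⟨s, hs, hsi⟩ := hcover i hi
    exact ⟨s, ⟨s, hs, rfl⟩, hsi⟩
  have hba := sub_le_of_forall_notMem_Ioo hh hcover' a.cast_nonneg hb (by
    rintro _ ⟨s, hs, rfl⟩ ⟨has, hsb⟩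
    rcases hadj s hs with hsa | hbs
    · exact (Nat.cast_le.2 hsa).not_gt has
    · exact (Nat.cast_le.2 hbs).not_gt hsb)
  rw [tsub_le_iff_right, ← Nat.cast_le (α := ℝ), Nat.cast_add]
  linarith [Nat.le_ceil (2 * r + h)]

theorem abs_sub_mul_div_le_of_abs_div_sub_div_le {s i n d δ : ℝ} (hn : 0 < n)
    (h : |s / n - i / d| ≤ δ / d) : |s - i * (n / d)| ≤ δ * (n / d) :=
  calc |s - i * (n / d)| = n * |s / n - i / d| := by
        rw [← abs_of_pos hn, ← abs_mul, abs_of_pos hn, mul_sub, mul_div_cancel₀ s hn.ne']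
        ring_nf
    _ ≤ n * (δ / d) := by gcongr
    _ = δ * (n / d) := by ring

/-- Let `n ≥ 1` and `N_r ≥ 2` be integers and let `S ⊆ {0,1,…,n}` with `0 ∈ S` and
`n ∈ S`. Suppose that for every `i ∈ {0,1,…,N_r−1}` there exists `s ∈ S` with
`|s/n − i/(N_r−1)| ≤ (2−√2)/(N_r−1)`. Then `MEI(S) ≤ ⌈(5−2√2)·n/(N_r−1)⌉`. -/
theorem mei_upper_bound (n Nr : ℕ) (hn : 1 ≤ n) (hNr : 2 ≤ Nr) (S : Finset ℕ)
    (hS : S ⊆ Finset.range (n + 1)) (h0 : 0 ∈ S) (hn' : n ∈ S)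
    (hcover : ∀ i ≤ Nr - 1, ∃ s ∈ S,
      |(s : ℝ) / (n : ℝ) - (i : ℝ) / ((Nr : ℝ) - 1)| ≤ (2 - Real.sqrt 2) / ((Nr : ℝ) - 1)) :
    (MEI n S : ℤ) ≤ ⌈(5 - 2 * Real.sqrt 2) * (n : ℝ) / ((Nr : ℝ) - 1)⌉ := by
  have hnR : (0 : ℝ) < n := by exact_mod_cast hn
  have hd : ((Nr - 1 : ℕ) : ℝ) = (Nr : ℝ) - 1 := Nat.cast_pred (by omega)
  have hdpos : (0 : ℝ) < (Nr : ℝ) - 1 := by rw [← hd]; exact_mod_cast (by omega : 0 < Nr - 1)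
  set h := (n : ℝ) / ((Nr : ℝ) - 1) with hh_def
  have hhpos : 0 < h := by positivity
  have hr : 0 ≤ (2 - Real.sqrt 2) * h :=
    mul_nonneg (sub_nonneg.2 ((Real.sqrt_le_left zero_le_two).2 (by norm_num))) hhpos.le
  have hx : (5 - 2 * Real.sqrt 2) * (n : ℝ) / ((Nr : ℝ) - 1) =
      2 * ((2 - Real.sqrt 2) * h) + h := by
    rw [hh_def]; ring
  rw [hx, ← Int.natCast_ceil_eq_ceil (by linarith)]
  refine mod_cast MEI_le_of_gap_le h0 hn' fun a _ b hb hadj => ?_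
  refine Nat.sub_le_ceil_of_forall_le_or_le (S := S) (m := Nr - 1) hhpos
    (fun i hi => ?_) ?_ hadj
  · obtain ⟨s, hs, hsi⟩ := hcover i hi
    exact ⟨s, hs, abs_sub_mul_div_le_of_abs_div_sub_div_le hnR hsi⟩
  · rw [hd, mul_div_cancel₀ _ hdpos.ne']
    exact_mod_cast Finset.mem_range_succ_iff.1 (hS hb)
end

section
/- There exist a constant c > 0 and a threshold n₀ ∈ ℕ such that for every odd integer n ≥ n₀ the following holds: if S is a uniformly random subset of size (n+1)/2 of {0,1,…,n}, then the expected value of MEI(S) is at least c·ln n. (This is the combinatorial core of the statement that, when the combined parent and offspring population of the NSGA-III with N = (n+1)/2 and N_r = 2N covers the full Pareto front of OneMinMax, the next population has expected MEI of Ω(log n).) -/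
/-!
Cut `{0, …, n}` into `2 ^ (k - 1)` consecutive blocks of length `k = ⌊log₂ n⌋ / 2`; a set that
misses a whole block has `MEI ≥ k`. With `M = (n + 1) / 2`, a uniformly random `M`-subset misses a
given block with probability `C(n + 1 - k, M) / C(n + 1, M)`, which lies between `2 ^ (-k-1)` and
`2 ^ (-k)` because `k ^ 2 ≪ M` (Bernoulli), and misses two given blocks with probability at most
`4 ^ (-k)`. By the Bonferroni inequality it therefore misses some block with probability at
least `1 / 8`, so `E[MEI] ≥ k / 8 ≥ log n / 32`.
-/

open Finset

namespace List

theorem exists_le_zipWith_sub_of_headI_lt {a k : ℕ} :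
    ∀ {l : List ℕ}, l.headI < a → (∀ x ∈ l, x < a ∨ a + k ≤ x) → (∃ v ∈ l, a + k ≤ v) →
      ∃ g ∈ zipWith (fun x y => y - x) l l.tail, k ≤ g
  | [], _, _, ⟨v, hv, _⟩ => absurd hv not_mem_nil
  | [x], hx, _, ⟨v, hv, hkv⟩ => by simp only [headI, mem_singleton] at hx hv; omega
  | x :: y :: l, hx, hl, ⟨v, hv, hkv⟩ => by
    simp only [headI] at hx
    rcases hl y (by simp) with hy | hy
    · have hv' : v ∈ y :: l := (mem_cons.1 hv).resolve_left (by omega)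
      obtain ⟨g, hg, hkg⟩ := exists_le_zipWith_sub_of_headI_lt (l := y :: l) hy
        (fun z hz => hl z (mem_cons_of_mem _ hz)) ⟨v, hv', hkv⟩
      exact ⟨g, mem_cons_of_mem _ hg, hkg⟩
    · exact ⟨y - x, mem_cons_self, by omega⟩

end List

theorem le_MEI_of_disjoint_Ico {n a k : ℕ} {S : Finset ℕ} (hS : S.Nonempty)
    (hak : a + k ≤ n + 1) (hgap : Disjoint S (Ico a (a + k))) : k ≤ MEI n S := by
  have hl : S.sort (· ≤ ·) ≠ [] := List.ne_nil_of_mem ((mem_sort _).2 hS.choose_spec)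
  obtain ⟨x, t, hxt⟩ := List.exists_cons_of_ne_nil hl
  have havoid : ∀ y ∈ x :: t, y < a ∨ a + k ≤ y := fun y hy => by
    have := disjoint_left.1 hgap ((mem_sort _).1 (hxt ▸ hy))
    rw [mem_Ico] at this
    omega
  unfold MEI
  rw [hxt]
  by_cases hfar : ∃ v ∈ x :: t, a + k ≤ v
  · by_cases hx : x < a
    · obtain ⟨g, hg, hkg⟩ := List.exists_le_zipWith_sub_of_headI_lt hx havoid hfar
      exact List.le_max_of_le' 0 (List.mem_cons_of_mem _ (List.mem_cons_of_mem _ hg)) hkg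
    · have := havoid x List.mem_cons_self
      exact List.le_max_of_le' 0 List.mem_cons_self (by simp only [List.headI]; omega)
  · push Not at hfar
    have hlast : (x :: t).getLastD 0 ∈ x :: t := by
      rw [List.getLastD_cons]; exact List.getLastD_mem_cons
    have := havoid _ hlast
    have := hfar _ hlast
    exact List.le_max_of_le' 0 (List.mem_cons_of_mem _ List.mem_cons_self) (by omega)

theorem Finset.powersetCard_inter {α : Type*} [DecidableEq α] (r : ℕ) (s t : Finset α) :
    powersetCard r s ∩ powersetCard r t = powersetCard r (s ∩ t) := by
  ext u
  simp only [mem_inter, mem_powersetCard, subset_inter_iff]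
  tauto

theorem Finset.sum_card_le_card_biUnion_add_sum_card_inter {α : Type*} [DecidableEq α]
    (A : ℕ → Finset α) (m : ℕ) :
    ∑ i ∈ range m, #(A i) ≤
      #((range m).biUnion A) + ∑ i ∈ range m, ∑ j ∈ range i, #(A i ∩ A j) := by
  induction m with
  | zero => simp
  | succ m ih =>
    rw [sum_range_succ, sum_range_succ, range_add_one, biUnion_insert]
    have hinter : #(A m ∩ (range m).biUnion A) ≤ ∑ j ∈ range m, #(A m ∩ A j) := by
      rw [inter_biUnion]; exact card_biUnion_le
    have := card_union_add_card_inter (A m) ((range m).biUnion A)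
    omega

namespace Nat

theorem two_mul_choose_le_choose_succ {n k : ℕ} (h : n + 1 ≤ 2 * k) :
    2 * n.choose k ≤ (n + 1).choose k := by
  rcases lt_or_ge n k with hnk | hkn
  · simp [choose_eq_zero_of_lt hnk]
  · refine le_of_mul_le_mul_right (a := n + 1 - k) ?_ (by omega)
    calc 2 * n.choose k * (n + 1 - k) = n.choose k * (2 * (n + 1 - k)) := by ring
      _ ≤ n.choose k * (n + 1) := by gcongr; omega
      _ = (n + 1).choose k * (n + 1 - k) := choose_mul_succ_eq n k

theorem two_pow_mul_choose_le_choose_add {n k j : ℕ} (h : n + j ≤ 2 * k) :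
    2 ^ j * n.choose k ≤ (n + j).choose k := by
  induction j with
  | zero => simp
  | succ j ih =>
    calc 2 ^ (j + 1) * n.choose k = 2 * (2 ^ j * n.choose k) := by ring
      _ ≤ 2 * (n + j).choose k := by gcongr; exact ih (by omega)
      _ ≤ (n + j + 1).choose k := two_mul_choose_le_choose_succ (by omega)

theorem choose_add_mul_pow_le (n k j : ℕ) :
    (n + j).choose k * (n + 1 - k) ^ j ≤ n.choose k * (n + j) ^ j := by
  induction j with
  | zero => simp
  | succ j ih =>
    calc (n + (j + 1)).choose k * (n + 1 - k) ^ (j + 1)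
        = (n + j + 1).choose k * (n + 1 - k) * (n + 1 - k) ^ j := by ring_nf
      _ ≤ (n + j + 1).choose k * (n + j + 1 - k) * (n + 1 - k) ^ j := by gcongr; omega
      _ = (n + j).choose k * (n + 1 - k) ^ j * (n + j + 1) := by
        rw [← choose_mul_succ_eq]; ring
      _ ≤ n.choose k * (n + j) ^ j * (n + j + 1) := Nat.mul_le_mul_right _ ih
      _ ≤ n.choose k * (n + j + 1) ^ j * (n + j + 1) :=
        Nat.mul_le_mul_right _ (Nat.mul_le_mul_left _ (Nat.pow_le_pow_left (by omega) j))
      _ = n.choose k * (n + (j + 1)) ^ (j + 1) := by ring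

theorem two_mul_le_two_pow (k : ℕ) : 2 * k ≤ 2 ^ k := by
  cases k with
  | zero => simp
  | succ j => have := j.lt_two_pow_self; rw [Nat.pow_succ]; omega

theorem pow_le_two_mul_sub_pow {M k : ℕ} (h : 2 * k ^ 2 ≤ M) : M ^ k ≤ 2 * (M - k) ^ k := by
  cases k with
  | zero => simp
  | succ j =>
    have hkM : j + 1 ≤ M := by nlinarith
    -- Bernoulli: `M ^ (j + 1) - (j + 1) ^ 2 * M ^ j ≤ (M - (j + 1)) ^ (j + 1)`
    have hbern := pow_add_mul_le_add_pow (a := (M : ℤ)) (b := -((j + 1 : ℕ) : ℤ))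
      (by positivity) (by push_cast; omega) (j + 1)
    have hsq : (2 * (j + 1) ^ 2 : ℤ) * M ^ j ≤ M * M ^ j :=
      mul_le_mul_of_nonneg_right (by exact_mod_cast h) (by positivity)
    zify [hkM] at hbern ⊢
    rw [Nat.add_sub_cancel, ← sub_eq_add_neg, _root_.pow_succ' (M : ℤ) j] at hbern
    rw [_root_.pow_succ' (M : ℤ) j]
    linarith

theorem choose_le_two_pow_succ_mul_choose_sub {M k : ℕ} (h : 2 * k ^ 2 ≤ M) :
    (2 * M).choose M ≤ 2 ^ (k + 1) * (2 * M - k).choose M := by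
  have hkM : k ≤ M := by nlinarith
  have hratio := choose_add_mul_pow_le (2 * M - k) M k
  rw [Nat.sub_add_cancel (by omega), show 2 * M - k + 1 - M = M + 1 - k by omega] at hratio
  refine le_of_mul_le_mul_right (a := (M + 1 - k) ^ k) ?_ (pow_pos (by omega) _)
  calc (2 * M).choose M * (M + 1 - k) ^ k ≤ (2 * M - k).choose M * (2 * M) ^ k := hratio
    _ = 2 ^ k * (2 * M - k).choose M * M ^ k := by ring
    _ ≤ 2 ^ k * (2 * M - k).choose M * (2 * (M + 1 - k) ^ k) := by
      gcongr
      exact (pow_le_two_mul_sub_pow h).trans (by gcongr; omega)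
    _ = 2 ^ (k + 1) * (2 * M - k).choose M * (M + 1 - k) ^ k := by ring

end Nat

theorem two_mul_mul_choose_le_card_biUnion {α : Type*} [DecidableEq α] {U : Finset α}
    {B : ℕ → Finset α} {m k M : ℕ} (hBU : ∀ i < m, B i ⊆ U) (hB : ∀ i < m, #(B i) = k)
    (hdisj : ∀ i < m, ∀ j < i, Disjoint (B i) (B j)) :
    2 * m * (#U - k).choose M ≤
      2 * #((range m).biUnion fun i => powersetCard M (U \ B i)) +
        m * (m - 1) * (#U - 2 * k).choose M := by
  have hbonf := sum_card_le_card_biUnion_add_sum_card_inter (fun i => powersetCard M (U \ B i)) m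
  have hsingle : ∀ i ∈ range m, #(powersetCard M (U \ B i)) = (#U - k).choose M := by
    intro i hi
    rw [mem_range] at hi
    rw [card_powersetCard, card_sdiff_of_subset (hBU i hi), hB i hi]
  have hpair : ∀ i ∈ range m, ∀ j ∈ range i,
      #(powersetCard M (U \ B i) ∩ powersetCard M (U \ B j)) = (#U - 2 * k).choose M := by
    intro i hi j hj
    rw [mem_range] at hi hj
    rw [powersetCard_inter, ← sdiff_union_distrib, card_powersetCard,
      card_sdiff_of_subset (union_subset (hBU i hi) (hBU j (by omega))),
      card_union_of_disjoint (hdisj i hi j hj), hB i hi, hB j (by omega), two_mul]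
  simp only [sum_congr rfl hsingle, sum_congr rfl fun i hi => sum_congr rfl (hpair i hi),
    sum_const, card_range, smul_eq_mul, ← sum_mul] at hbonf
  have := sum_range_id_mul_two m
  nlinarith

theorem two_mul_mul_choose_le_card_filter_le_MEI {n M k m : ℕ} (hM : 0 < M)
    (hmk : m * k ≤ n + 1) :
    2 * m * (n + 1 - k).choose M ≤
      2 * #{S ∈ (range (n + 1)).powersetCard M | k ≤ MEI n S} +
        m * (m - 1) * (n + 1 - 2 * k).choose M := by
  have hfit : ∀ i < m, i * k + k ≤ n + 1 := fun i hi => by nlinarith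
  have hcount := two_mul_mul_choose_le_card_biUnion (U := range (n + 1)) (k := k) (M := M)
    (B := fun i => Ico (i * k) (i * k + k))
    (fun i hi x hx => by rw [mem_Ico] at hx; rw [mem_range]; have := hfit i hi; omega)
    (fun i _ => by simp)
    (fun i _ j hj => disjoint_left.2 fun x hxi hxj => by
      rw [mem_Ico] at hxi hxj; have : (j + 1) * k ≤ i * k := by gcongr; omega
      nlinarith)
  rw [card_range] at hcount
  refine hcount.trans (Nat.add_le_add_right (Nat.mul_le_mul_left 2 (card_le_card ?_)) _)
  intro S hS
  obtain ⟨i, hi, hSi⟩ := mem_biUnion.1 hS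
  obtain ⟨hSU, hSM⟩ := mem_powersetCard.1 hSi
  rw [mem_range] at hi
  refine mem_filter.2 ⟨mem_powersetCard.2 ⟨hSU.trans sdiff_subset, hSM⟩, ?_⟩
  exact le_MEI_of_disjoint_Ico (card_pos.1 (by omega)) (hfit i hi)
    (disjoint_of_subset_left hSU sdiff_disjoint)

theorem choose_le_eight_mul_card_filter_le_MEI {n M k : ℕ} (hnM : n + 1 = 2 * M) (hk : 0 < k)
    (hkn : 4 ^ k ≤ n + 1) :
    (n + 1).choose M ≤ 8 * #{S ∈ (range (n + 1)).powersetCard M | k ≤ MEI n S} := by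
  set m := 2 ^ (k - 1)
  have hm : 2 * m = 2 ^ k := by rw [← Nat.pow_succ']; congr 1; omega
  have h4k : 4 ^ k = 2 ^ k * 2 ^ k := by rw [← mul_pow]; norm_num
  have hk2 : 2 * k ^ 2 ≤ M := by
    have := Nat.mul_le_mul (Nat.two_mul_le_two_pow k) (Nat.two_mul_le_two_pow k)
    nlinarith
  have hkM : 2 * k ≤ M := by nlinarith
  have hmk : m * k ≤ n + 1 := by
    have := Nat.mul_le_mul (le_of_eq hm) (Nat.two_mul_le_two_pow k)
    nlinarith
  have hcount := two_mul_mul_choose_le_card_filter_le_MEI (M := M) (by omega) hmk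
  rw [hnM] at hcount ⊢
  have hpair : 2 * m * (2 * M - 2 * k).choose M ≤ (2 * M - k).choose M := by
    have := Nat.two_pow_mul_choose_le_choose_add (n := 2 * M - 2 * k) (j := k) (k := M) (by omega)
    rwa [show 2 * M - 2 * k + k = 2 * M - k by omega, ← hm] at this
  have hcentral := Nat.choose_le_two_pow_succ_mul_choose_sub hk2
  rw [pow_succ, ← hm] at hcentral
  have := Nat.mul_le_mul_right ((2 * M - 2 * k).choose M) (Nat.mul_le_mul_left m (Nat.sub_le m 1))
  have := Nat.mul_le_mul_left m hpair
  linarith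

theorem mul_choose_le_eight_mul_sum_MEI {n M k : ℕ} (hnM : n + 1 = 2 * M) (hk : 0 < k)
    (hkn : 4 ^ k ≤ n + 1) :
    k * (n + 1).choose M ≤ 8 * ∑ S ∈ (range (n + 1)).powersetCard M, MEI n S := by
  calc k * (n + 1).choose M
      ≤ k * (8 * #{S ∈ (range (n + 1)).powersetCard M | k ≤ MEI n S}) :=
        Nat.mul_le_mul_left k (choose_le_eight_mul_card_filter_le_MEI hnM hk hkn)
    _ = 8 * (#{S ∈ (range (n + 1)).powersetCard M | k ≤ MEI n S} • k) := by
        rw [smul_eq_mul]; ring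
    _ ≤ 8 * ∑ S ∈ (range (n + 1)).powersetCard M with k ≤ MEI n S, MEI n S :=
        Nat.mul_le_mul_left 8 (card_nsmul_le_sum _ _ _ fun S hS => (mem_filter.1 hS).2)
    _ ≤ 8 * ∑ S ∈ (range (n + 1)).powersetCard M, MEI n S :=
        Nat.mul_le_mul_left 8 (sum_le_sum_of_subset (filter_subset _ _))

theorem Real.log_le_four_mul_log_two_div_two {n : ℕ} (hn : 4 ≤ n) :
    Real.log n ≤ 4 * (Nat.log 2 n / 2 : ℕ) := by
  set L := Nat.log 2 n
  have hL : 2 ≤ L := Nat.le_log_of_pow_le one_lt_two (by simpa using hn)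
  have hnL : (n : ℝ) ≤ 2 ^ (L + 1) := by
    exact_mod_cast (Nat.lt_pow_succ_log_self one_lt_two n).le
  have hL2 : (L : ℝ) + 1 ≤ 4 * (L / 2 : ℕ) := by exact_mod_cast (by omega : L + 1 ≤ 4 * (L / 2))
  calc Real.log n ≤ Real.log (2 ^ (L + 1)) := Real.log_le_log (by positivity) hnL
    _ = (L + 1) * Real.log 2 := by rw [Real.log_pow]; push_cast; ring
    _ ≤ (L + 1) * 1 := by gcongr; exact (Real.log_two_lt_d9.trans (by norm_num)).le
    _ ≤ 4 * (L / 2 : ℕ) := by linarith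

/-- There exist a constant `c > 0` and a threshold `n₀ ∈ ℕ` such that for every odd
integer `n ≥ n₀`: if `S` is a uniformly random subset of size `(n+1)/2` of `{0,1,…,n}`,
then the expected value of `MEI(S)` is at least `c·ln n`. (The expectation is the
average of `MEI(S)` over all `(n+1)/2`-element subsets `S` of `{0,1,…,n}`.) -/
theorem expected_mei_random_half_subset_log :
    ∃ c : ℝ, 0 < c ∧ ∃ n₀ : ℕ, ∀ n : ℕ, n₀ ≤ n → Odd n →
      c * Real.log n ≤
        (∑ S ∈ (Finset.range (n + 1)).powersetCard ((n + 1) / 2), (MEI n S : ℝ)) /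
          (((Finset.range (n + 1)).powersetCard ((n + 1) / 2)).card : ℝ) := by
  refine ⟨1 / 32, by norm_num, 4, fun n hn hodd => ?_⟩
  set k := Nat.log 2 n / 2
  have hL : 2 ≤ Nat.log 2 n := Nat.le_log_of_pow_le one_lt_two (by simpa using hn)
  have hkn : 4 ^ k ≤ n + 1 := calc
    4 ^ k = 2 ^ (2 * k) := by rw [pow_mul]; norm_num
    _ ≤ 2 ^ Nat.log 2 n := Nat.pow_le_pow_right two_pos (by omega)
    _ ≤ n + 1 := (Nat.pow_log_le_self 2 (by omega)).trans n.le_succ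
  have hsum := mul_choose_le_eight_mul_sum_MEI (M := (n + 1) / 2)
    (by obtain ⟨t, rfl⟩ := hodd; omega) (by omega) hkn
  have hlog := Real.log_le_four_mul_log_two_div_two hn
  rw [card_powersetCard, card_range, le_div_iff₀ (by exact_mod_cast Nat.choose_pos (by omega))]
  have hC : (0 : ℝ) ≤ (n + 1).choose ((n + 1) / 2) := by positivity
  have hsum' : (k : ℝ) * (n + 1).choose ((n + 1) / 2) ≤
      8 * ∑ S ∈ (range (n + 1)).powersetCard ((n + 1) / 2), (MEI n S : ℝ) := by
    exact_mod_cast hsum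
  linarith [mul_le_mul_of_nonneg_right hlog hC]
end
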